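/- Let p, q be coprime positive integers, n ≥ 2, and N = p^n + q^n. The images in (ℤ/Nℤ)^n of the translates of the discrete cubes {0,…,q−1}^n and {0,…,p−1}^{n-1}×{q,…,q+p−1} by the lattice generated by the columns of A (with q on diagonal, -p on subdiagonal, p in entry (1,n)) partition (ℤ/Nℤ)^n; i.e., there is a lattice tiling of (ℤ/Nℤ)^n by discrete hypercubes of side lengths p and q. -/

import Mathlib

/-- The integer matrix `A` with `q` on the diagonal, `-p` on the subdiagonal,
`p` in the top-right corner (entry `(1,n)`), and `0` elsewhere. -/
def tilingMatrixInt (p q : ℕ) (n : ℕ) : Matrix (Fin n) (Fin n) ℤ :=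
  Matrix.of fun i j =>
    if (i : ℕ) = (j : ℕ) then (q : ℤ)
    else if (i : ℕ) = (j : ℕ) + 1 then -(p : ℤ)
    else if (i : ℕ) = 0 ∧ (j : ℕ) = n - 1 then (p : ℤ)
    else 0

/-- The union of the two discrete cubes `{0,…,q-1}^n` and
`{0,…,p-1}^{n-1} × {q,…,q+p-1}`, viewed in `(ℤ/Nℤ)^n`. -/
def discreteTile (p q n N : ℕ) : Set (Fin n → ZMod N) :=
  {c | (∃ m : Fin n → ℕ, (∀ i, m i < q) ∧ c = fun i => (m i : ZMod N)) ∨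
    (∃ m : Fin n → ℕ,
      (∀ i : Fin n, ((i : ℕ) + 1 < n → m i < p) ∧
        ((i : ℕ) + 1 = n → q ≤ m i ∧ m i < q + p)) ∧
      c = fun i => (m i : ZMod N))}

/-!
Let `w j = q ^ j * p ^ (n - 1 - j)` and `φ c = ∑ j, w j * c j` on `(ℤ/N)ⁿ`. Since
`q * w j = p * w (j + 1)` and `q * w (n - 1) + p * w 0 = N`, the functional `φ` kills every column
of `A`; conversely, `q` being a unit, the subdiagonal columns move any vector of `ker φ` into the
image of `A`. So the theorem says that `φ` maps the two cubes bijectively onto `ℤ/N`.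

In the group ring `ℤ[ℤ/N]` the geometric series gives
`(∑ c ∈ cubes, X ^ φ c) * ∏ j, (X ^ w j - 1)`
`  = ∏ j, (X ^ (q w j) - 1) + X ^ qⁿ * ∏ j, (X ^ (p w j) - 1)`,
which vanishes because `q w j = p w (j + 1)` and `qⁿ + pⁿ = 0`. The uniform sum `∑ r, X ^ r` is
also killed by this product and has the same augmentation `N`. Each `w j` generates `ℤ/N`, so
multiplication by `X ^ w j - 1` is injective on elements of augmentation zero, and the two sums
agree.
-/

open Finset Matrix AddMonoidAlgebra

section CommRing

variable {R : Type*} [CommRing R]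

theorem sum_prod_pow_mul_prod_sub_one {ι : Type*} [Fintype ι] [DecidableEq ι] (x : ι → R)
    (b : ℕ) :
    (∑ a : ι → Fin b, ∏ j, x j ^ (a j : ℕ)) * ∏ j, (x j - 1) = ∏ j, (x j ^ b - 1) := by
  rw [← Fintype.prod_sum fun j (a : Fin b) => x j ^ (a : ℕ), ← prod_mul_distrib]
  refine prod_congr rfl fun j _ => ?_
  rw [Fin.sum_univ_eq_sum_range (x j ^ ·), geom_sum_mul]

theorem prod_pow_sub_one_add_mul_prod_pow_sub_one {m p q : ℕ} (x : Fin (m + 1) → R)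
    (hx : ∀ k : Fin m, x k.castSucc ^ q = x k.succ ^ p)
    (hx' : x (Fin.last m) ^ q * x 0 ^ p = 1) :
    ∏ j, (x j ^ q - 1) + x (Fin.last m) ^ q * ∏ j, (x j ^ p - 1) = 0 := by
  rw [Fin.prod_univ_castSucc, Fin.prod_univ_succ]
  simp_rw [hx]
  linear_combination (∏ k : Fin m, (x k.succ ^ p - 1)) * hx'

end CommRing

namespace AddMonoidAlgebra

theorem bijective_of_sum_single_eq {M ι : Type*} [Fintype M] [Fintype ι] (f : ι → M)
    (h : ∑ i, single (f i) (1 : ℤ) = ∑ g : M, single g 1) : Function.Bijective f := by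
  classical
  refine Function.bijective_iff_existsUnique f |>.mpr fun g => ?_
  have hg := congrArg (fun β => β.coeff g) h
  simp only [coeff_sum, Finsupp.finsetSum_apply, coeff_single, Finsupp.single_apply] at hg
  rw [sum_ite_eq', if_pos (mem_univ g), sum_boole] at hg
  exact (Fintype.existsUnique_iff_card_one _).mpr (mod_cast hg)

section GroupRing

variable {G : Type*} [AddCommGroup G]

noncomputable def augmentation : ℤ[G] →ₐ[ℤ] ℤ := AddMonoidAlgebra.lift ℤ ℤ G 1

@[simp]
theorem augmentation_single (g : G) (c : ℤ) : augmentation (single g c) = c := by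
  simp [augmentation]

theorem augmentation_eq_sum_coeff [Fintype G] (α : ℤ[G]) :
    augmentation α = ∑ g, α.coeff g := by
  rw [augmentation, lift_apply, Finsupp.sum_fintype _ _ (by simp)]
  simp

theorem eq_zero_of_mul_single_sub_one_eq_zero [Fintype G] {g : G}
    (hg : AddSubgroup.zmultiples g = ⊤) {α : ℤ[G]} (h : α * (single g 1 - 1) = 0)
    (hα : augmentation α = 0) : α = 0 := by
  have hper : Function.Periodic α.coeff g := fun y => by
    rw [mul_sub, mul_one, sub_eq_zero] at h
    conv_lhs => rw [← h]
    simp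
  have hconst : ∀ y, α.coeff y = α.coeff 0 := fun y => by
    obtain ⟨k, rfl⟩ := AddSubgroup.mem_zmultiples_iff.mp (hg ▸ AddSubgroup.mem_top y)
    simpa using hper.zsmul k 0
  have hcoeff0 : α.coeff 0 = 0 := by
    rw [augmentation_eq_sum_coeff, sum_congr rfl fun y _ => hconst y, sum_const, card_univ,
      smul_eq_zero] at hα
    exact hα.resolve_left Fintype.card_ne_zero
  ext y
  rw [hconst y, hcoeff0]
  rfl

theorem eq_zero_of_mul_prod_single_sub_one_eq_zero [Fintype G] {ι : Type*} (w : ι → G)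
    (s : Finset ι) (hw : ∀ i ∈ s, AddSubgroup.zmultiples (w i) = ⊤) {α : ℤ[G]}
    (h : α * ∏ i ∈ s, (single (w i) 1 - 1) = 0) (hα : augmentation α = 0) : α = 0 := by
  induction s using Finset.cons_induction generalizing α with
  | empty => simpa using h
  | cons a s _ ih =>
    rw [prod_cons, ← mul_assoc] at h
    refine eq_zero_of_mul_single_sub_one_eq_zero (hw a (mem_cons_self a s)) ?_ hα
    refine ih (fun i hi => hw i (mem_cons_of_mem hi)) h ?_
    simp [hα]

theorem sum_single_mul_single [Fintype G] (g : G) :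
    (∑ y : G, single y (1 : ℤ)) * single g 1 = ∑ y : G, single y 1 := by
  rw [sum_mul]
  exact Fintype.sum_equiv (Equiv.addRight g) _ _ fun y => by simp [single_mul_single]

theorem bijective_of_sum_single_mul_prod_eq_zero [Fintype G] {ι κ : Type*} [Fintype ι]
    (f : ι → G) (hcard : Fintype.card ι = Fintype.card G) (w : κ → G) {s : Finset κ}
    (hs : s.Nonempty) (hw : ∀ k ∈ s, AddSubgroup.zmultiples (w k) = ⊤)
    (h : (∑ i, single (f i) (1 : ℤ)) * ∏ k ∈ s, (single (w k) 1 - 1) = 0) :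
    Function.Bijective f := by
  classical
  refine bijective_of_sum_single_eq f (sub_eq_zero.mp ?_)
  refine eq_zero_of_mul_prod_single_sub_one_eq_zero w s hw ?_ ?_
  · obtain ⟨k, hk⟩ := hs
    rw [sub_mul, h, ← mul_prod_erase s _ hk, ← mul_assoc, mul_sub, mul_one,
      sum_single_mul_single, sub_self, zero_mul, sub_zero]
  · simp [hcard]

end GroupRing

end AddMonoidAlgebra

-- Dimensions are written `m + 1`, so that `Fin.castSucc`/`Fin.succ` describe the subdiagonal
-- of `A` and `Fin.last` its corner.
section Lattice

variable (R : Type*) [CommRing R] (p q m : ℕ)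

def tilingWeight (j : Fin (m + 1)) : R := (q : R) ^ (j : ℕ) * (p : R) ^ (m - j)

abbrev tilingMatrix : Matrix (Fin (m + 1)) (Fin (m + 1)) R :=
  (tilingMatrixInt p q (m + 1)).map (Int.cast : ℤ → R)

variable {R p q m}

theorem natCast_mul_tilingWeight_castSucc (k : Fin m) :
    (q : R) * tilingWeight R p q m k.castSucc = p * tilingWeight R p q m k.succ := by
  have hk : m - k = m - (k + 1) + 1 := by omega
  simp only [tilingWeight, Fin.val_castSucc, Fin.val_succ, hk]
  ring

theorem natCast_mul_tilingWeight_last_add :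
    (q : R) * tilingWeight R p q m (Fin.last m) + p * tilingWeight R p q m 0 =
      p ^ (m + 1) + q ^ (m + 1) := by
  simp only [tilingWeight, Fin.val_last, Fin.val_zero, Nat.sub_self, Nat.sub_zero]
  ring

theorem tilingMatrix_mulVec_single_castSucc (k : Fin m) :
    tilingMatrix R p q m *ᵥ Pi.single k.castSucc 1 =
      Pi.single k.castSucc (q : R) - Pi.single k.succ (p : R) := by
  ext i
  rw [mulVec_single_one]
  simp only [col_apply, map_apply, tilingMatrixInt, of_apply,
    Pi.sub_apply, Pi.single_apply, Fin.ext_iff, Fin.val_castSucc, Fin.val_succ]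
  split_ifs <;> first | omega | simp

theorem tilingMatrix_mulVec_single_last (hm : 0 < m) :
    tilingMatrix R p q m *ᵥ Pi.single (Fin.last m) 1 =
      Pi.single (Fin.last m) (q : R) + Pi.single 0 (p : R) := by
  ext i
  rw [mulVec_single_one]
  simp only [col_apply, map_apply, tilingMatrixInt, of_apply,
    Pi.add_apply, Pi.single_apply, Fin.ext_iff, Fin.val_last, Fin.val_zero]
  split_ifs <;> first | omega | simp

theorem tilingWeight_dotProduct_tilingMatrix_mulVec (hm : 0 < m)
    (hN : (p : R) ^ (m + 1) + q ^ (m + 1) = 0) (v : Fin (m + 1) → R) :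
    tilingWeight R p q m ⬝ᵥ (tilingMatrix R p q m *ᵥ v) = 0 := by
  have hcol : ∀ j, tilingWeight R p q m ⬝ᵥ (tilingMatrix R p q m *ᵥ Pi.single j 1) = 0 := by
    refine Fin.lastCases ?_ fun k => ?_
    · rw [tilingMatrix_mulVec_single_last hm, dotProduct_add, dotProduct_single,
        dotProduct_single, mul_comm, mul_comm _ (p : R), natCast_mul_tilingWeight_last_add, hN]
    · rw [tilingMatrix_mulVec_single_castSucc, dotProduct_sub, dotProduct_single,
        dotProduct_single, mul_comm, mul_comm _ (p : R), natCast_mul_tilingWeight_castSucc,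
        sub_self]
  have hvecMul : tilingWeight R p q m ᵥ* tilingMatrix R p q m = 0 := funext fun j => by
    rw [Pi.zero_apply, ← hcol j, dotProduct_mulVec, dotProduct_single, mul_one]
  rw [dotProduct_mulVec, hvecMul, zero_dotProduct]

theorem exists_tilingMatrix_mulVec_eq (hq : IsUnit (q : R)) (y : Fin (m + 1) → R)
    (hy : tilingWeight R p q m ⬝ᵥ y = 0) : ∃ v, tilingMatrix R p q m *ᵥ v = y := by
  set L := LinearMap.range (tilingMatrix R p q m).mulVecLin
  have hcol : ∀ k : Fin m, Pi.single k.castSucc (q : R) - Pi.single k.succ (p : R) ∈ L :=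
    fun k => ⟨_, tilingMatrix_mulVec_single_castSucc k⟩
  have hchain : ∀ i : Fin (m + 1),
      (q : R) ^ (m - i) • Pi.single i 1 - (p : R) ^ (m - i) • Pi.single (Fin.last m) 1 ∈ L := by
    refine Fin.reverseInduction (by simp) fun k hk => ?_
    have hk' : m - k = m - k.succ + 1 := by simp only [Fin.val_succ]; omega
    convert L.add_mem (L.smul_mem ((q : R) ^ (m - k.succ)) (hcol k)) (L.smul_mem (p : R) hk)
      using 1
    ext j
    simp only [Fin.val_castSucc, hk', Pi.sub_apply, Pi.add_apply, Pi.smul_apply, Pi.single_apply,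
      smul_eq_mul]
    split_ifs <;> ring
  have hscaled : (q : R) ^ m • y ∈ L := by
    have hw : ∑ i, y i * (q : R) ^ (i : ℕ) * (p : R) ^ (m - i) = 0 := by
      rw [← hy, dotProduct]
      exact sum_congr rfl fun i _ => by rw [tilingWeight]; ring
    convert L.sum_mem (t := univ) fun i _ => L.smul_mem (y i * (q : R) ^ (i : ℕ)) (hchain i)
      using 1
    ext j
    simp only [Pi.smul_apply, Finset.sum_apply, Pi.sub_apply, Pi.single_apply, smul_eq_mul,
      mul_sub, sum_sub_distrib, mul_ite, mul_one, mul_zero, sum_ite_eq, mem_univ, if_true]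
    rw [sum_ite_irrel, hw, sum_const_zero, ite_self, sub_zero, mul_assoc, ← pow_add,
      Nat.add_sub_cancel' j.is_le, mul_comm]
  obtain ⟨u, hu⟩ := hq.pow m
  obtain ⟨v, hv⟩ := L.smul_mem (↑u⁻¹ : R) hscaled
  refine ⟨v, ?_⟩
  rwa [smul_smul, ← hu, Units.inv_mul, one_smul] at hv

end Lattice

theorem ZMod.isUnit_natCast_pow_add_pow_right {p q : ℕ} (hco : p.Coprime q) (m : ℕ) :
    IsUnit (q : ZMod (p ^ (m + 1) + q ^ (m + 1))) := by
  rw [ZMod.isUnit_iff_coprime, pow_succ q]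
  exact (Nat.coprime_add_mul_right_right q _ _).mpr (hco.symm.pow_right _)

theorem ZMod.isUnit_natCast_pow_add_pow_left {p q : ℕ} (hco : p.Coprime q) (m : ℕ) :
    IsUnit (p : ZMod (p ^ (m + 1) + q ^ (m + 1))) := by
  rw [add_comm]
  exact ZMod.isUnit_natCast_pow_add_pow_right hco.symm m

theorem ZMod.zmultiples_eq_top_of_isUnit {N : ℕ} {u : ZMod N} (hu : IsUnit u) :
    AddSubgroup.zmultiples u = ⊤ := by
  obtain ⟨u, rfl⟩ := hu
  refine (AddSubgroup.eq_top_iff' _).mpr fun y => ⟨((u⁻¹ : (ZMod N)ˣ) * y : ZMod N).cast, ?_⟩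
  dsimp only
  rw [zsmul_eq_mul, ZMod.intCast_zmod_cast, mul_comm, Units.mul_inv_cancel_left]

theorem exists_int_tilingMatrix_mulVec_iff {p q m N : ℕ} (hm : 0 < m) (hq : IsUnit (q : ZMod N))
    (hN : (p : ZMod N) ^ (m + 1) + q ^ (m + 1) = 0) (y : Fin (m + 1) → ZMod N) :
    (∃ z : Fin (m + 1) → ℤ, y = tilingMatrix (ZMod N) p q m *ᵥ fun i => (z i : ZMod N)) ↔
      tilingWeight (ZMod N) p q m ⬝ᵥ y = 0 := by
  constructor
  · rintro ⟨z, rfl⟩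
    exact tilingWeight_dotProduct_tilingMatrix_mulVec hm hN _
  · intro hy
    obtain ⟨v, rfl⟩ := exists_tilingMatrix_mulVec_eq hq y hy
    exact ⟨fun i => (v i).cast, by simp only [ZMod.intCast_zmod_cast]⟩

section Tile

variable (p q m N : ℕ)

def tileVec : (Fin (m + 1) → Fin q) ⊕ (Fin (m + 1) → Fin p) → Fin (m + 1) → ZMod N :=
  Sum.elim (fun a i => ((a i : ℕ) : ZMod N))
    (fun b => (fun i => ((b i : ℕ) : ZMod N)) + Pi.single (Fin.last m) (q : ZMod N))

theorem range_tileVec : Set.range (tileVec p q m N) = discreteTile p q (m + 1) N := by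
  ext c
  constructor
  · rintro ⟨a | b, rfl⟩
    · exact Or.inl ⟨fun i => a i, fun i => (a i).isLt, rfl⟩
    · refine Or.inr ⟨fun i => b i + if i = Fin.last m then q else 0,
        fun i => ⟨fun hi => ?_, fun hi => ?_⟩, ?_⟩
      · have hi' : i ≠ Fin.last m := fun h => by simp [h] at hi
        simp [hi']
      · have hi' : i = Fin.last m := Fin.ext (by simp only [Fin.val_last]; omega)
        simp [hi', add_comm q]
      · funext i
        by_cases hi : i = Fin.last m <;> simp [tileVec, hi]
  · rintro (⟨a, ha, rfl⟩ | ⟨b, hb, rfl⟩)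
    · exact ⟨.inl fun i => ⟨a i, ha i⟩, rfl⟩
    · refine ⟨.inr fun i => ⟨b i - if i = Fin.last m then q else 0, ?_⟩, ?_⟩
      · by_cases hi : i = Fin.last m
        · subst hi
          have := (hb (Fin.last m)).2 (by simp)
          simp only [if_true]
          omega
        · have := (hb i).1 (by have := Fin.val_lt_last hi; omega)
          simp only [hi, if_false]
          omega
      · funext i
        by_cases hi : i = Fin.last m
        · subst hi
          have := (hb (Fin.last m)).2 (by simp)
          simp only [tileVec, Sum.elim_inr, Pi.add_apply, ↓reduceIte, Pi.single_eq_same]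
          rw [← Nat.cast_add, Nat.sub_add_cancel this.1]
        · simp [tileVec, hi]

variable {p q m N}

theorem single_dotProduct_natCast {ι R : Type*} [Fintype ι] [CommRing R] (w : ι → R)
    (a : ι → ℕ) :
    (single (w ⬝ᵥ fun i => (a i : R)) (1 : ℤ) : ℤ[R]) = ∏ i, single (w i) 1 ^ a i := by
  simp only [dotProduct, single_pow, one_pow, prod_single, prod_const_one, nsmul_eq_mul,
    mul_comm]

theorem sum_single_tileVec_mul_prod_eq_zero (hN : (p : ZMod N) ^ (m + 1) + q ^ (m + 1) = 0) :
    (∑ d, single (tilingWeight (ZMod N) p q m ⬝ᵥ tileVec p q m N d) (1 : ℤ)) *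
      ∏ j, (single (tilingWeight (ZMod N) p q m j) 1 - 1) = 0 := by
  set w := tilingWeight (ZMod N) p q m
  have hx : ∀ k : Fin m, single (w k.castSucc) (1 : ℤ) ^ q = single (w k.succ) 1 ^ p := by
    intro k
    simp only [single_pow, one_pow, nsmul_eq_mul, natCast_mul_tilingWeight_castSucc, w]
  have hx' : single (w (Fin.last m)) (1 : ℤ) ^ q * single (w 0) 1 ^ p = 1 := by
    rw [single_pow, single_pow, single_mul_single, nsmul_eq_mul, nsmul_eq_mul,
      natCast_mul_tilingWeight_last_add, hN, one_pow, one_pow, mul_one, one_def]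
  have hinr : ∀ b : Fin (m + 1) → Fin p,
      single (w ⬝ᵥ tileVec p q m N (.inr b)) (1 : ℤ) =
        single (w (Fin.last m)) 1 ^ q * ∏ j, single (w j) 1 ^ (b j : ℕ) := by
    intro b
    rw [tileVec, Sum.elim_inr, dotProduct_add, dotProduct_single, ← single_dotProduct_natCast,
      single_pow, single_mul_single, one_pow, mul_one, nsmul_eq_mul, mul_comm (q : ZMod N),
      add_comm]
  rw [Fintype.sum_sum_type]
  simp only [hinr, ← mul_sum]
  simp only [tileVec, Sum.elim_inl, single_dotProduct_natCast]
  rw [add_mul, mul_assoc, sum_prod_pow_mul_prod_sub_one, sum_prod_pow_mul_prod_sub_one]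
  exact prod_pow_sub_one_add_mul_prod_pow_sub_one _ hx hx'

theorem bijective_tilingWeight_dotProduct_tileVec (hco : p.Coprime q) :
    Function.Bijective fun d =>
      tilingWeight (ZMod (p ^ (m + 1) + q ^ (m + 1))) p q m ⬝ᵥ
        tileVec p q m (p ^ (m + 1) + q ^ (m + 1)) d := by
  have : NeZero (p ^ (m + 1) + q ^ (m + 1)) := ⟨fun h => by
    simp only [Nat.add_eq_zero_iff, pow_eq_zero_iff (Nat.succ_ne_zero m)] at h
    simp [h.1, h.2] at hco⟩
  have hw : ∀ j, IsUnit (tilingWeight (ZMod (p ^ (m + 1) + q ^ (m + 1))) p q m j) := fun j =>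
    ((ZMod.isUnit_natCast_pow_add_pow_right hco m).pow _).mul
      ((ZMod.isUnit_natCast_pow_add_pow_left hco m).pow _)
  refine bijective_of_sum_single_mul_prod_eq_zero _ ?_ _ univ_nonempty
    (fun j _ => ZMod.zmultiples_eq_top_of_isUnit (hw j))
    (sum_single_tileVec_mul_prod_eq_zero (by exact_mod_cast ZMod.natCast_self _))
  simp [Fintype.card_sum, ZMod.card, add_comm]

end Tile

theorem discrete_lattice_tiling_general (p q : ℕ) (hco : Nat.Coprime p q)
    (n : ℕ) (hn : 2 ≤ n) (x : Fin n → ZMod (p ^ n + q ^ n)) :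
    ∃! c : Fin n → ZMod (p ^ n + q ^ n),
      c ∈ discreteTile p q n (p ^ n + q ^ n) ∧
      ∃ z : Fin n → ℤ,
        x - c = ((tilingMatrixInt p q n).map (Int.cast : ℤ → ZMod (p ^ n + q ^ n))).mulVec
          fun i => ((z i : ℤ) : ZMod (p ^ n + q ^ n)) := by
  obtain ⟨m, rfl⟩ : ∃ m, n = m + 1 := ⟨n - 1, by omega⟩
  have hN : (p : ZMod (p ^ (m + 1) + q ^ (m + 1))) ^ (m + 1) + q ^ (m + 1) = 0 := by
    exact_mod_cast ZMod.natCast_self _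
  have hφ := bijective_tilingWeight_dotProduct_tileVec (m := m) hco
  simp only [← range_tileVec,
    exists_int_tilingMatrix_mulVec_iff (by omega) (ZMod.isUnit_natCast_pow_add_pow_right hco m) hN,
    dotProduct_sub, sub_eq_zero]
  obtain ⟨d, hd⟩ := hφ.surjective (tilingWeight _ p q m ⬝ᵥ x)
  refine ⟨tileVec p q m _ d, ⟨⟨d, rfl⟩, hd.symm⟩, ?_⟩
  rintro _ ⟨⟨d', rfl⟩, hd'⟩
  rw [hφ.injective (hd'.symm.trans hd.symm)]

/-- For coprime positive integers `p, q` and `N = pⁿ + qⁿ`, the translates of the two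
discrete cubes by the image of the lattice `A·ℤⁿ` partition `(ℤ/Nℤ)ⁿ`: every point has
a unique representation as a lattice point plus a point of the discrete tile. -/
theorem discrete_lattice_tiling (p q : ℕ) (hp : 0 < p) (hq : 0 < q) (hco : Nat.Coprime p q)
    (n : ℕ) (hn : 2 ≤ n) (x : Fin n → ZMod (p ^ n + q ^ n)) :
    ∃! c : Fin n → ZMod (p ^ n + q ^ n),
      c ∈ discreteTile p q n (p ^ n + q ^ n) ∧
      ∃ z : Fin n → ℤ,
        x - c = ((tilingMatrixInt p q n).map (Int.cast : ℤ → ZMod (p ^ n + q ^ n))).mulVec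
          fun i => ((z i : ℤ) : ZMod (p ^ n + q ^ n)) :=
  discrete_lattice_tiling_general p q hco n hn x
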